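/- Assuming a predicate odd : ℕ → Prop with odd (n+1) ↔ ¬ odd n for all n, and satisfying the least-fixed-point (induction) principle: for every S : ℕ → Prop, if (∀ n, ¬ S n → S (n+1)) then ∀ n, odd n → S n, one derives False. -/
import Mathlib

theorem no_weakly_stratified_inductive_odd
    (odd : ℕ → Prop)
    (h1 : ∀ n, odd (n + 1) ↔ ¬ odd n)
    (h2 : ∀ S : ℕ → Prop, (∀ n, ¬ S n → S (n + 1)) → ∀ n, odd n → S n) :
    False := by
  let ev : ℕ → Prop := fun n => Nat.rec True (fun _ p => ¬ p) n
  have hev : ∀ n, odd n → ev n := h2 ev (fun n h => h)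
  have hnev : ∀ n, odd n → ¬ ev n := h2 (fun n => ¬ ev n) (fun n h => h)
  have hnone : ∀ n, ¬ odd n := fun n ho => hnev n ho (hev n ho)
  exact hnone 1 ((h1 0).mpr (hnone 0))
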